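/- If A is Schur stable and W ⊆ ℝ^n is compact, then there exists a compact robust positively invariant set Ω for x_{t+1} = A x_t + w_t, w_t ∈ W; for instance Ω = Σ_{k=0}^∞ A^k W (Minkowski sum), which is well defined and satisfies A Ω ⊕ W ⊆ Ω (indeed with equality). -/

import Mathlib

/-!
Gelfand's formula `‖Aᵏ‖ ^ (1 / k) → ρ(A) < 1` makes `∑ ‖Aᵏ‖` summable, so every series
`∑ Aᵏ wₖ` with all `wₖ ∈ W` converges, uniformly in `(wₖ) ∈ Wᴺ`. Hence `Ω` is the continuous
image of the compact product `Wᴺ`. Prepending a term `w` to `(wₖ)` maps the sum `x` to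
`A x + w`, which gives `A Ω + W ⊆ Ω`; dropping the first term gives the reverse inclusion.
-/

open Matrix Pointwise

/-- A real square matrix is Schur stable if all of its (complex) eigenvalues lie strictly
inside the unit circle. -/
def SchurStable {m : Type*} [Fintype m] [DecidableEq m] (A : Matrix m m ℝ) : Prop :=
  ∀ μ ∈ spectrum ℂ (A.map (algebraMap ℝ ℂ)), ‖μ‖ < 1

/-- The infinite Minkowski sum `Ω = Σ_{k=0}^∞ Aᵏ W`. -/
def minkowskiLimit {n : ℕ} (A : Matrix (Fin n) (Fin n) ℝ) (W : Set (Fin n → ℝ)) :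
    Set (Fin n → ℝ) :=
  {x | ∃ f : ℕ → (Fin n → ℝ), (∀ k, f k ∈ W) ∧ HasSum (fun k => (A ^ k).mulVec (f k)) x}

open Filter

section SpectralRadius

variable {𝔸 : Type*} [NormedRing 𝔸] [NormedAlgebra ℂ 𝔸] [CompleteSpace 𝔸]

theorem summable_norm_pow_of_spectralRadius_lt_one {a : 𝔸} (ha : spectralRadius ℂ a < 1) :
    Summable fun n => ‖a ^ n‖ := by
  obtain ⟨r, hρr, hr1⟩ := ENNReal.lt_iff_exists_nnreal_btwn.mp ha
  refine .of_norm_bounded_eventually_nat (g := fun n => (r : ℝ) ^ n)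
    (summable_geometric_of_lt_one r.coe_nonneg (by exact_mod_cast hr1)) ?_
  have hroot : ∀ᶠ n : ℕ in atTop, ‖a ^ n‖ ^ (1 / n : ℝ) < r := by
    filter_upwards
      [(spectrum.pow_norm_pow_one_div_tendsto_nhds_spectralRadius a).eventually_lt_const hρr]
      with n hn
    exact (ENNReal.ofReal_lt_coe_iff (by positivity)).mp hn
  filter_upwards [hroot, eventually_ne_atTop 0] with n hn hn0
  rw [norm_norm, ← Real.rpow_inv_natCast_pow (norm_nonneg (a ^ n)) hn0, ← one_div]
  exact pow_le_pow_left₀ (by positivity) hn.le n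

end SpectralRadius

theorem HasSum.pow_mulVec_zero_add {R m : Type*} [CommSemiring R] [TopologicalSpace R]
    [IsTopologicalSemiring R] [Fintype m] [DecidableEq m] {A : Matrix m m R} {f : ℕ → m → R}
    {x : m → R} (h : HasSum (fun k => (A ^ k) *ᵥ f (k + 1)) x) :
    HasSum (fun k => (A ^ k) *ᵥ f k) (A *ᵥ x + f 0) := by
  have hAx : HasSum (fun k => (A ^ (k + 1)) *ᵥ f (k + 1)) (A *ᵥ x) := by
    simpa [Function.comp_def, Matrix.mulVecLin_apply, Matrix.mulVec_mulVec, ← pow_succ'] using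
      h.map A.mulVecLin (continuous_const.matrix_mulVec continuous_id)
  simpa [add_comm] using HasSum.zero_add (f := fun k => (A ^ k) *ᵥ f k) hAx

theorem mulVec_add_mem_minkowskiLimit {n : ℕ} {A : Matrix (Fin n) (Fin n) ℝ}
    {W : Set (Fin n → ℝ)} {x w : Fin n → ℝ} (hx : x ∈ minkowskiLimit A W)
    (hw : w ∈ W) : A *ᵥ x + w ∈ minkowskiLimit A W := by
  obtain ⟨f, hfW, hf⟩ := hx
  let g : ℕ → Fin n → ℝ := fun k => Nat.casesOn k w f
  refine ⟨g, fun k => ?_, HasSum.pow_mulVec_zero_add (f := g) hf⟩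
  cases k
  · exact hw
  · exact hfW _

section MatrixNorm

attribute [local instance] Matrix.linftyOpNormedRing Matrix.linftyOpNormedAlgebra

variable {m : Type*} [Fintype m] [DecidableEq m]

theorem SchurStable.spectralRadius_lt_one {A : Matrix m m ℝ} (hA : SchurStable A) :
    spectralRadius ℂ (A.map (algebraMap ℝ ℂ)) < 1 := by
  rcases (spectrum ℂ (A.map (algebraMap ℝ ℂ))).eq_empty_or_nonempty with hempty | hne
  · rw [spectralRadius, hempty]
    simp
  · simpa using spectrum.spectralRadius_lt_of_forall_lt_of_nonempty hne (r := 1)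
      fun μ hμ => by simpa [← NNReal.coe_lt_coe] using hA μ hμ

theorem Matrix.linfty_opNorm_map_ofReal (A : Matrix m m ℝ) :
    ‖A.map (algebraMap ℝ ℂ)‖ = ‖A‖ := by
  simp [Matrix.linfty_opNorm_def]

theorem SchurStable.summable_norm_pow {A : Matrix m m ℝ} (hA : SchurStable A) :
    Summable fun k => ‖A ^ k‖ := by
  have hpow : ∀ k, (A.map (algebraMap ℝ ℂ)) ^ k = (A ^ k).map (algebraMap ℝ ℂ) := fun k =>
    (map_pow (algebraMap ℝ ℂ).mapMatrix A k).symm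
  simpa only [hpow, Matrix.linfty_opNorm_map_ofReal] using
    summable_norm_pow_of_spectralRadius_lt_one hA.spectralRadius_lt_one

theorem norm_pow_mulVec_le {A : Matrix m m ℝ} {W : Set (m → ℝ)} {M : ℝ}
    (hM : ∀ w ∈ W, ‖w‖ ≤ M) {f : ℕ → m → ℝ} (hfW : ∀ k, f k ∈ W) (k : ℕ) :
    ‖(A ^ k) *ᵥ f k‖ ≤ ‖A ^ k‖ * M :=
  (Matrix.linfty_opNorm_mulVec _ _).trans (by gcongr; exact hM _ (hfW k))

theorem summable_pow_mulVec {A : Matrix m m ℝ} {W : Set (m → ℝ)}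
    (hA : Summable fun k => ‖A ^ k‖) (hW : Bornology.IsBounded W) {f : ℕ → m → ℝ}
    (hfW : ∀ k, f k ∈ W) :
    Summable fun k => (A ^ k) *ᵥ f k := by
  obtain ⟨M, hM⟩ := hW.exists_norm_le
  exact .of_norm_bounded (hA.mul_right M) (norm_pow_mulVec_le hM hfW)

section MinkowskiLimit

variable {n : ℕ} {A : Matrix (Fin n) (Fin n) ℝ} {W : Set (Fin n → ℝ)}

theorem exists_eq_mulVec_add_of_mem_minkowskiLimit (hA : Summable fun k => ‖A ^ k‖)
    (hW : Bornology.IsBounded W) {y : Fin n → ℝ} (hy : y ∈ minkowskiLimit A W) :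
    ∃ x ∈ minkowskiLimit A W, ∃ w ∈ W, y = A *ᵥ x + w := by
  obtain ⟨f, hfW, hf⟩ := hy
  have htail := (summable_pow_mulVec hA hW fun k => hfW (k + 1)).hasSum
  exact ⟨_, ⟨_, fun k => hfW (k + 1), htail⟩, f 0, hfW 0, hf.unique htail.pow_mulVec_zero_add⟩

theorem minkowskiLimit_eq_image (hA : Summable fun k => ‖A ^ k‖) (hW : Bornology.IsBounded W) :
    minkowskiLimit A W =
      (fun f : ℕ → Fin n → ℝ => ∑' k, (A ^ k) *ᵥ f k) '' {f | ∀ k, f k ∈ W} := by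
  ext x
  constructor
  · rintro ⟨f, hfW, hf⟩
    exact ⟨f, hfW, hf.tsum_eq⟩
  · rintro ⟨f, hfW, rfl⟩
    exact ⟨f, hfW, (summable_pow_mulVec hA hW hfW).hasSum⟩

theorem isCompact_minkowskiLimit (hA : Summable fun k => ‖A ^ k‖) (hW : IsCompact W) :
    IsCompact (minkowskiLimit A W) := by
  obtain ⟨M, hM⟩ := hW.isBounded.exists_norm_le
  have hcont :
      ContinuousOn (fun f : ℕ → Fin n → ℝ => ∑' k, (A ^ k) *ᵥ f k) {f | ∀ k, f k ∈ W} :=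
    continuousOn_tsum
      (fun k => (continuous_const.matrix_mulVec (continuous_apply k)).continuousOn)
      (hA.mul_right M) fun k f hfW => norm_pow_mulVec_le hM hfW k
  rw [minkowskiLimit_eq_image hA hW.isBounded]
  exact (isCompact_pi_infinite fun _ => hW).image_of_continuousOn hcont

end MinkowskiLimit

/-- If `A` is Schur stable and `W` compact, then `Ω = Σ_{k=0}^∞ Aᵏ W` is a compact robust
positively invariant set for `x ↦ A x + w`, `w ∈ W`, satisfying `A Ω ⊕ W = Ω`. -/
theorem compact_rpi_exists {n : ℕ} (A : Matrix (Fin n) (Fin n) ℝ)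
    (hA : SchurStable A) (W : Set (Fin n → ℝ)) (hW : IsCompact W) :
    IsCompact (minkowskiLimit A W) ∧
      (∀ x ∈ minkowskiLimit A W, ∀ w ∈ W, A.mulVec x + w ∈ minkowskiLimit A W) ∧
      (∀ y ∈ minkowskiLimit A W, ∃ x ∈ minkowskiLimit A W, ∃ w ∈ W, y = A.mulVec x + w) :=
  ⟨isCompact_minkowskiLimit hA.summable_norm_pow hW,
    fun _ hx _ hw => mulVec_add_mem_minkowskiLimit hx hw,
    fun _ hy => exists_eq_mulVec_add_of_mem_minkowskiLimit hA.summable_norm_pow hW.isBounded hy⟩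

end MatrixNorm
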